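/- arXiv:2303.17462 — 6 statements merged into one kernel-verified Lean document; each statement's English description precedes it below -/
import Mathlib

section
/- Let u : (0,∞) × ℝ → ℝ be smooth and satisfy u_t − (1/x)·∂_x(x·u·u_x) = u(1−u) for all x > 0, t ∈ ℝ. Define T^t(x,t) = x·u·e^{−t}·I₀(√2 x) and T^x(x,t) = e^{−t}·((√2/2)·x·u²·I₁(√2 x) − x·u·u_x·I₀(√2 x)), where I₀, I₁ are modified Bessel functions of the first kind and u, u_x are evaluated at (x,t). Then ∂_t T^t + ∂_x T^x = 0 for all x > 0, t ∈ ℝ. -/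
/-- Conserved vector for the cylindrical Fisher equation `u_t − (1/x)(x u u_x)_x = u(1−u)`
corresponding to the multiplier `Λ = e^{−t} I₀(√2 x)`. `I₀, I₁` are the modified Bessel
functions of the first kind of orders 0 and 1, characterized by `I₀' = I₁` and
`I₁'(z) = I₀(z) − I₁(z)/z`. -/
theorem stmt3 (I0 I1 : ℝ → ℝ) (hI0 : ContDiff ℝ (⊤ : ℕ∞) I0) (hI1 : ContDiff ℝ (⊤ : ℕ∞) I1)
    (hI0' : ∀ z : ℝ, deriv I0 z = I1 z)
    (hI1' : ∀ z : ℝ, z ≠ 0 → deriv I1 z = I0 z - I1 z / z)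
    (u : ℝ → ℝ → ℝ) (hu : ContDiff ℝ (⊤ : ℕ∞) (Function.uncurry u))
    (hpde : ∀ x t : ℝ, 0 < x →
      deriv (fun s => u x s) t
        - (1 / x) * deriv (fun s => s * u s t * deriv (fun r => u r t) s) x
        = u x t * (1 - u x t))
    (Tt Tx : ℝ → ℝ → ℝ)
    (hTt : ∀ x t : ℝ, Tt x t = x * u x t * Real.exp (-t) * I0 (Real.sqrt 2 * x))
    (hTx : ∀ x t : ℝ, Tx x t = Real.exp (-t) *
      ((Real.sqrt 2 / 2) * x * (u x t) ^ 2 * I1 (Real.sqrt 2 * x)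
        - x * u x t * deriv (fun r => u r t) x * I0 (Real.sqrt 2 * x))) :
    ∀ x t : ℝ, 0 < x →
      deriv (fun s => Tt x s) t + deriv (fun s => Tx s t) x = 0 := by
  intro x t hx
  set c : ℝ := Real.sqrt 2 with hc_def
  have hc : c * c = 2 := Real.mul_self_sqrt (by norm_num)
  have hcpos : 0 < c := Real.sqrt_pos.mpr (by norm_num)
  have hcx : c * x ≠ 0 := by positivity
  -- smoothness of slices
  have hslice : ContDiff ℝ (⊤ : ℕ∞) (fun r : ℝ => u r t) :=
    hu.comp (contDiff_id.prodMk contDiff_const)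
  have hslice2 : ContDiff ℝ (⊤ : ℕ∞) (fun s : ℝ => u x s) :=
    hu.comp (contDiff_const.prodMk contDiff_id)
  have hux : ContDiff ℝ (⊤ : ℕ∞) (deriv (fun r : ℝ => u r t)) :=
    (contDiff_infty_iff_deriv.mp (hslice.of_le (by simp))).2
  -- abbreviations
  set U : ℝ := u x t with hU
  set V : ℝ := deriv (fun r : ℝ => u r t) x with hV
  set ut : ℝ := deriv (fun s : ℝ => u x s) t with hut_def
  set P : ℝ := deriv (fun s => s * u s t * deriv (fun r => u r t) s) x with hP_def
  -- basic HasDerivAt facts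
  have hf : HasDerivAt (fun r : ℝ => u r t) V x :=
    (hslice.differentiable (by simp) x).hasDerivAt
  have hfx : DifferentiableAt ℝ (deriv (fun r : ℝ => u r t)) x :=
    hux.differentiable (by simp) x
  have hg : HasDerivAt (fun s => s * u s t * deriv (fun r => u r t) s) P x :=
    (((differentiableAt_id.mul hf.differentiableAt).mul hfx)).hasDerivAt
  have hlin : HasDerivAt (fun s : ℝ => c * s) c x := by
    simpa using (hasDerivAt_id x).const_mul c
  have hI0c : HasDerivAt (fun s : ℝ => I0 (c * s)) (I1 (c * x) * c) x := by
    have h0 : HasDerivAt I0 (I1 (c * x)) (c * x) := by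
      have := (hI0.differentiable (by simp) (c * x)).hasDerivAt
      rwa [hI0'] at this
    exact h0.comp x hlin
  have hI1c : HasDerivAt (fun s : ℝ => I1 (c * s))
      ((I0 (c * x) - I1 (c * x) / (c * x)) * c) x := by
    have h1 : HasDerivAt I1 (I0 (c * x) - I1 (c * x) / (c * x)) (c * x) := by
      have := (hI1.differentiable (by simp) (c * x)).hasDerivAt
      rwa [hI1' _ hcx] at this
    exact h1.comp x hlin
  -- derivative in t of Tt x
  have hexp : HasDerivAt (fun s : ℝ => Real.exp (-s)) (Real.exp (-t) * -1) t :=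
    (Real.hasDerivAt_exp (-t)).comp t ((hasDerivAt_id t).neg)
  have hut : HasDerivAt (fun s : ℝ => u x s) ut t :=
    (hslice2.differentiable (by simp) t).hasDerivAt
  have hA : HasDerivAt (fun s => Tt x s)
      ((x * ut * Real.exp (-t) + x * u x t * (Real.exp (-t) * -1)) * I0 (c * x)) t := by
    have : HasDerivAt (fun s => x * u x s * Real.exp (-s) * I0 (c * x))
        ((x * ut * Real.exp (-t) + x * u x t * (Real.exp (-t) * -1)) * I0 (c * x)) t :=
      ((hut.const_mul x).mul hexp).mul_const _
    have hfun : (fun s => Tt x s) = fun s => x * u x s * Real.exp (-s) * I0 (c * x) :=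
      funext fun s => hTt x s
    rw [hfun]
    exact this
  -- derivative in x of Tx · t
  have h1 : HasDerivAt (fun s => c / 2 * s * (u s t) ^ 2 * I1 (c * s))
      ((c / 2 * 1 * (u x t) ^ 2 + c / 2 * x * (2 * u x t ^ 1 * V)) * I1 (c * x)
        + c / 2 * x * (u x t) ^ 2 * ((I0 (c * x) - I1 (c * x) / (c * x)) * c)) x := by
    have := (((hasDerivAt_id x).const_mul (c / 2)).mul (hf.pow 2)).mul hI1c
    have e : (fun s => c / 2 * s * (u s t) ^ 2 * I1 (c * s))
        = ((fun y => c / 2 * id y) * (fun r => u r t) ^ 2 * fun s => I1 (c * s)) := by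
      funext s; simp
    rw [e]
    refine this.congr_deriv ?_
    simp
  have h2 : HasDerivAt (fun s => s * u s t * deriv (fun r => u r t) s * I0 (c * s))
      (P * I0 (c * x) + x * u x t * V * (I1 (c * x) * c)) x := hg.mul hI0c
  have hB : HasDerivAt (fun s => Tx s t)
      (Real.exp (-t) *
        (((c / 2 * 1 * (u x t) ^ 2 + c / 2 * x * (2 * u x t ^ 1 * V)) * I1 (c * x)
          + c / 2 * x * (u x t) ^ 2 * ((I0 (c * x) - I1 (c * x) / (c * x)) * c))
        - (P * I0 (c * x) + x * u x t * V * (I1 (c * x) * c)))) x := by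
    have hfun : (fun s => Tx s t) = fun s => Real.exp (-t) *
        (c / 2 * s * (u s t) ^ 2 * I1 (c * s)
          - s * u s t * deriv (fun r => u r t) s * I0 (c * s)) :=
      funext fun s => hTx s t
    rw [hfun]
    exact (h1.sub h2).const_mul _
  rw [hA.deriv, hB.deriv]
  -- the PDE, cleared of the 1/x
  have key : x * ut - P = x * U * (1 - U) := by
    have h := hpde x t hx
    field_simp at h
    linarith
  -- eliminate the division I1(cx)/(cx)
  set q : ℝ := I1 (c * x) / (c * x) with hq_def
  have hqB : I1 (c * x) = q * (c * x) := (div_mul_cancel₀ _ hcx).symm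
  rw [hqB]
  linear_combination (Real.exp (-t) * I0 (c * x)) * key +
    (Real.exp (-t) * x * U ^ 2 * I0 (c * x) / 2) * hc
end

section
/- Let u : (0,∞) × ℝ → ℝ be smooth and satisfy u_t − (1/x)·∂_x(x·u·u_x) = u(1−u). Define T^t(x,t) = x·u·e^{−t}·K₀(√2 x) and T^x(x,t) = e^{−t}·(−(√2/2)·x·u²·K₁(√2 x) − x·u·u_x·K₀(√2 x)). Then ∂_t T^t + ∂_x T^x = 0 for all x > 0, t ∈ ℝ. -/
/-- Conserved vector for the cylindrical Fisher equation `u_t − (1/x)(x u u_x)_x = u(1−u)`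
corresponding to the multiplier `Λ = e^{−t} K₀(√2 x)`. `K₀, K₁` are the modified Bessel
functions of the second kind of orders 0 and 1, characterized by `K₀' = −K₁` and
`K₁'(z) = −K₀(z) − K₁(z)/z`. -/
theorem stmt4 (K0 K1 : ℝ → ℝ) (hK0 : ContDiff ℝ (⊤ : ℕ∞) K0) (hK1 : ContDiff ℝ (⊤ : ℕ∞) K1)
    (hK0' : ∀ z : ℝ, deriv K0 z = -K1 z)
    (hK1' : ∀ z : ℝ, z ≠ 0 → deriv K1 z = -K0 z - K1 z / z)
    (u : ℝ → ℝ → ℝ) (hu : ContDiff ℝ (⊤ : ℕ∞) (Function.uncurry u))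
    (hpde : ∀ x t : ℝ, 0 < x →
      deriv (fun s => u x s) t
        - (1 / x) * deriv (fun s => s * u s t * deriv (fun r => u r t) s) x
        = u x t * (1 - u x t))
    (Tt Tx : ℝ → ℝ → ℝ)
    (hTt : ∀ x t : ℝ, Tt x t = x * u x t * Real.exp (-t) * K0 (Real.sqrt 2 * x))
    (hTx : ∀ x t : ℝ, Tx x t = Real.exp (-t) *
      ((-(Real.sqrt 2) / 2) * x * (u x t) ^ 2 * K1 (Real.sqrt 2 * x)
        - x * u x t * deriv (fun r => u r t) x * K0 (Real.sqrt 2 * x))) :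
    ∀ x t : ℝ, 0 < x →
      deriv (fun s => Tt x s) t + deriv (fun s => Tx s t) x = 0 := by
  intro x t hx
  set c : ℝ := Real.sqrt 2 with hcdef
  have hc2 : c * c = 2 := Real.mul_self_sqrt (by norm_num)
  have hcpos : (0:ℝ) < c := Real.sqrt_pos.mpr (by norm_num)
  have hxne : x ≠ 0 := hx.ne'
  set F := Function.uncurry u with hF
  have hud : Differentiable ℝ F := hu.differentiable (by simp)
  set ux : ℝ → ℝ → ℝ := fun a b => fderiv ℝ F (a, b) (1, 0) with huxdef
  have hderx : ∀ a b : ℝ, HasDerivAt (fun r => u r b) (ux a b) a := by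
    intro a b
    have h1 : HasDerivAt (fun r : ℝ => (r, b)) ((1:ℝ), (0:ℝ)) a :=
      (hasDerivAt_id a).prodMk (hasDerivAt_const a b)
    have h2 := (hud (a, b)).hasFDerivAt.comp_hasDerivAt a h1
    simpa [hF, Function.uncurry, Function.comp_def] using h2
  have hdert : ∀ a b : ℝ, HasDerivAt (fun s => u a s) (fderiv ℝ F (a, b) (0, 1)) b := by
    intro a b
    have h1 : HasDerivAt (fun s : ℝ => (a, s)) ((0:ℝ), (1:ℝ)) b :=
      (hasDerivAt_const b a).prodMk (hasDerivAt_id b)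
    have h2 := (hud (a, b)).hasFDerivAt.comp_hasDerivAt b h1
    simpa [hF, Function.uncurry, Function.comp_def] using h2
  have hA : ∀ a b : ℝ, deriv (fun r => u r b) a = ux a b := fun a b => (hderx a b).deriv
  -- smoothness of ux
  have hux_cd : ContDiff ℝ (⊤ : ℕ∞) (fun p : ℝ × ℝ => ux p.1 p.2) := by
    have h1 : ContDiff ℝ (⊤ : ℕ∞) (fun p : ℝ × ℝ => fderiv ℝ F p) := hu.fderiv_right (by simp)
    exact h1.clm_apply contDiff_const
  have huxd : Differentiable ℝ (fun s => ux s t) := by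
    have := (hux_cd.differentiable (by simp)).comp
      ((differentiable_id : Differentiable ℝ (fun s : ℝ => s)).prodMk (differentiable_const t))
    simpa [Function.comp_def] using this
  set Uxx := deriv (fun s => ux s t) x with hUxx
  have hux1 : HasDerivAt (fun s => ux s t) Uxx x := (huxd x).hasDerivAt
  -- exp
  have he : HasDerivAt (fun s : ℝ => Real.exp (-s)) (-Real.exp (-t)) t := by
    have := (Real.hasDerivAt_exp (-t)).comp t (hasDerivAt_neg t)
    simpa [Function.comp_def] using this
  -- time derivative of Tt
  have hT1 : HasDerivAt (fun s => Tt x s)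
      ((x * fderiv ℝ F (x, t) (0, 1) * Real.exp (-t) + x * u x t * (-Real.exp (-t)))
        * K0 (c * x)) t := by
    have h0 : (fun s => Tt x s) = fun s => x * u x s * Real.exp (-s) * K0 (c * x) :=
      funext fun s => hTt x s
    rw [h0]
    exact (((hdert x t).const_mul x).mul he).mul_const _
  -- Bessel derivatives
  have hlin : HasDerivAt (fun s : ℝ => c * s) c x := by
    simpa using (hasDerivAt_id x).const_mul c
  have hK0x : HasDerivAt (fun s => K0 (c * s)) (-K1 (c * x) * c) x := by
    have h := ((hK0.differentiable (by simp) (c * x)).hasDerivAt).comp x hlin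
    rw [hK0'] at h
    simpa [Function.comp_def] using h
  have hcx : c * x ≠ 0 := (mul_pos hcpos hx).ne'
  have hK1x : HasDerivAt (fun s => K1 (c * s))
      ((-K0 (c * x) - K1 (c * x) / (c * x)) * c) x := by
    have h := ((hK1.differentiable (by simp) (c * x)).hasDerivAt).comp x hlin
    rw [hK1' _ hcx] at h
    simpa [Function.comp_def] using h
  -- x-derivative pieces
  have hA1 : HasDerivAt (fun s : ℝ => -c / 2 * s) (-c / 2) x := by
    simpa using (hasDerivAt_id x).const_mul (-c / 2)
  have hP1 := (hA1.mul ((hderx x t).pow 2)).mul hK1x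
  have hD := ((hasDerivAt_id' x).mul (hderx x t)).mul hux1
  have hP2 := hD.mul hK0x
  have hT2 : HasDerivAt (fun s => Tx s t)
      (Real.exp (-t) *
        (((-c / 2 * (u x t ^ 2) + -c / 2 * x * (2 * u x t ^ 1 * ux x t)) * K1 (c * x)
            + -c / 2 * x * u x t ^ 2 * ((-K0 (c * x) - K1 (c * x) / (c * x)) * c))
          - (((1 * u x t + x * ux x t) * ux x t + x * u x t * Uxx) * K0 (c * x)
            + x * u x t * ux x t * (-K1 (c * x) * c)))) x := by
    have h0 : (fun s => Tx s t) = fun s => Real.exp (-t) *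
        (-c / 2 * s * u s t ^ 2 * K1 (c * s) - s * u s t * ux s t * K0 (c * s)) :=
      funext fun s => by rw [hTx, hA]
    rw [h0]
    exact ((hP1.sub hP2).const_mul _)
  -- PDE in derivative form
  have hp := hpde x t hx
  rw [(hdert x t).deriv] at hp
  have hfun1 : (fun s => s * u s t * deriv (fun r => u r t) s)
      = fun s => s * u s t * ux s t := funext fun s => by rw [hA]
  rw [hfun1, (show HasDerivAt (fun s => s * u s t * ux s t) ((1 * u x t + x * ux x t) * ux x t + x * u x t * Uxx) x from hD).deriv] at hp
  have h2 : x * fderiv ℝ F (x, t) (0, 1)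
      - ((1 * u x t + x * ux x t) * ux x t + x * u x t * Uxx)
      = x * (u x t * (1 - u x t)) := by
    field_simp at hp
    linear_combination hp
  rw [hT1.deriv, hT2.deriv]
  have hxx : x * x⁻¹ = 1 := mul_inv_cancel₀ hxne
  have hcc : (c * x) * (c * x)⁻¹ = 1 := mul_inv_cancel₀ hcx
  linear_combination (Real.exp (-t) * K0 (c * x)) * h2
    + (Real.exp (-t) * x * u x t ^ 2 * K0 (c * x) / 2) * hc2
    + (Real.exp (-t) * c * u x t ^ 2 * K1 (c * x) / 2) * hcc
end

section
/- Let m, p > 0, set k = √(2p/m), and let u : (0,∞) × ℝ → ℝ be smooth and satisfy u_t − (m/x)·∂_x(x·u·u_x) = p·u². Define T^t(x,t) = x·u·J₀(kx) and T^x(x,t) = −(mk/2)·x·u²·J₁(kx) − m·x·u·u_x·J₀(kx). Then ∂_t T^t + ∂_x T^x = 0 for all x > 0, t ∈ ℝ. -/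
/-- Conserved vector for `u_t − (m/x)(x u u_x)_x = p u²` corresponding to the multiplier
`Λ = J₀(kx)` with `k = √(2p/m)`. `J₀, J₁` are Bessel functions of the first kind of
orders 0 and 1, characterized by `J₀' = −J₁` and `J₁'(z) = J₀(z) − J₁(z)/z`. -/
theorem stmt5 (J0 J1 : ℝ → ℝ) (hJ0 : ContDiff ℝ (⊤ : ℕ∞) J0) (hJ1 : ContDiff ℝ (⊤ : ℕ∞) J1)
    (hJ0' : ∀ z : ℝ, deriv J0 z = -J1 z)
    (hJ1' : ∀ z : ℝ, z ≠ 0 → deriv J1 z = J0 z - J1 z / z)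
    (m p : ℝ) (hm : 0 < m) (hp : 0 < p) (k : ℝ) (hk : k = Real.sqrt (2 * p / m))
    (u : ℝ → ℝ → ℝ) (hu : ContDiff ℝ (⊤ : ℕ∞) (Function.uncurry u))
    (hpde : ∀ x t : ℝ, 0 < x →
      deriv (fun s => u x s) t
        - (m / x) * deriv (fun s => s * u s t * deriv (fun r => u r t) s) x
        = p * (u x t) ^ 2)
    (Tt Tx : ℝ → ℝ → ℝ)
    (hTt : ∀ x t : ℝ, Tt x t = x * u x t * J0 (k * x))
    (hTx : ∀ x t : ℝ, Tx x t =
      -((m * k / 2) * x * (u x t) ^ 2 * J1 (k * x))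
        - m * x * u x t * deriv (fun r => u r t) x * J0 (k * x)) :
    ∀ x t : ℝ, 0 < x →
      deriv (fun s => Tt x s) t + deriv (fun s => Tx s t) x = 0 := by
  intro x t hx
  have hx' : (x : ℝ) ≠ 0 := hx.ne'
  have hkpos : 0 < k := by
    rw [hk]; exact Real.sqrt_pos.mpr (div_pos (by linarith) hm)
  have hkx : k * x ≠ 0 := (mul_pos hkpos hx).ne'
  have hk2 : m * k ^ 2 = 2 * p := by
    rw [hk, Real.sq_sqrt (le_of_lt (div_pos (by linarith) hm))]
    field_simp
  have hpk : p = m * k ^ 2 / 2 := by linarith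
  -- differentiability facts
  have ha : ContDiff ℝ (⊤ : ℕ∞) (fun s => u s t) :=
    hu.comp (contDiff_id.prodMk contDiff_const)
  have hat : ContDiff ℝ (⊤ : ℕ∞) (fun s => u x s) :=
    hu.comp (contDiff_const.prodMk contDiff_id)
  have hone : (1 : WithTop ℕ∞) ≤ (⊤ : ℕ∞) := by exact_mod_cast le_top
  have ha2 : ContDiff ℝ ((⊤ : ℕ∞) : WithTop ℕ∞) (fun s => u s t) := ha.of_le (by simp)
  have ha' : ContDiff ℝ ((⊤ : ℕ∞) : WithTop ℕ∞) (deriv (fun r => u r t)) :=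
    (contDiff_infty_iff_deriv.mp ha2).2
  have hw : ContDiff ℝ ((⊤ : ℕ∞) : WithTop ℕ∞)
      (fun s => s * u s t * deriv (fun r => u r t) s) :=
    (contDiff_id.mul ha2).mul ha'
  -- abbreviations (as plain terms)
  have hA : HasDerivAt (fun s => u s t) (deriv (fun r => u r t) x) x :=
    (ha.differentiable (by simp) x).hasDerivAt
  have hW : HasDerivAt (fun s => s * u s t * deriv (fun r => u r t) s)
      (deriv (fun s => s * u s t * deriv (fun r => u r t) s) x) x :=
    (hw.differentiable (by simp) x).hasDerivAt
  have hUt : HasDerivAt (fun s => u x s) (deriv (fun s => u x s) t) t :=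
    (hat.differentiable (by simp) t).hasDerivAt
  have hlin : HasDerivAt (fun s : ℝ => k * s) k x := by
    simpa using (hasDerivAt_id x).const_mul k
  have hJ0x : HasDerivAt (fun s => J0 (k * s)) (-(k * J1 (k * x))) x := by
    have h1 : HasDerivAt J0 (deriv J0 (k * x)) (k * x) :=
      (hJ0.differentiable (by simp) (k * x)).hasDerivAt
    have := h1.comp x hlin
    rw [hJ0'] at this
    refine this.congr_deriv ?_; ring
  have hJ1x : HasDerivAt (fun s => J1 (k * s))
      ((J0 (k * x) - J1 (k * x) / (k * x)) * k) x := by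
    have h1 : HasDerivAt J1 (deriv J1 (k * x)) (k * x) :=
      (hJ1.differentiable (by simp) (k * x)).hasDerivAt
    have := h1.comp x hlin
    rw [hJ1' _ hkx] at this
    exact this
  -- derivative of the time component
  have hTt' : HasDerivAt (fun s => Tt x s)
      (x * deriv (fun s => u x s) t * J0 (k * x)) t := by
    have hfun : (fun s => Tt x s) = fun s => x * u x s * J0 (k * x) :=
      funext fun s => hTt x s
    rw [hfun]
    exact (hUt.const_mul x).mul_const _
  -- derivative of the first piece of Tx
  have h1 : HasDerivAt (fun s => s * (u s t) ^ 2 * J1 (k * s))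
      (((u x t) ^ 2 + 2 * x * u x t * deriv (fun r => u r t) x) * J1 (k * x)
        + x * (u x t) ^ 2 * ((J0 (k * x) - J1 (k * x) / (k * x)) * k)) x := by
    have := ((hasDerivAt_id x).mul (hA.pow 2)).mul hJ1x
    refine this.congr_deriv ?_
    push_cast
    simp only [id_eq, Pi.mul_apply, Pi.pow_apply]
    ring
  -- derivative of the second piece of Tx
  have h2 : HasDerivAt
      (fun s => s * u s t * deriv (fun r => u r t) s * J0 (k * s))
      (deriv (fun s => s * u s t * deriv (fun r => u r t) s) x * J0 (k * x)
        + x * u x t * deriv (fun r => u r t) x * (-(k * J1 (k * x)))) x :=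
    hW.mul hJ0x
  -- derivative of the space component
  have hTx' : HasDerivAt (fun s => Tx s t)
      (-((m * k / 2) *
          (((u x t) ^ 2 + 2 * x * u x t * deriv (fun r => u r t) x) * J1 (k * x)
            + x * (u x t) ^ 2 * ((J0 (k * x) - J1 (k * x) / (k * x)) * k)))
        - m * (deriv (fun s => s * u s t * deriv (fun r => u r t) s) x * J0 (k * x)
            + x * u x t * deriv (fun r => u r t) x * (-(k * J1 (k * x))))) x := by
    have hfun : (fun s => Tx s t)
        = fun s => -((m * k / 2) * (s * (u s t) ^ 2 * J1 (k * s)))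
            - m * (s * u s t * deriv (fun r => u r t) s * J0 (k * s)) := by
      funext s; rw [hTx]; ring
    rw [hfun]
    exact ((h1.const_mul (m * k / 2)).neg).sub (h2.const_mul m)
  rw [hTt'.deriv, hTx'.deriv]
  have hUtval : deriv (fun s => u x s) t
      = p * (u x t) ^ 2
        + (m / x) * deriv (fun s => s * u s t * deriv (fun r => u r t) s) x := by
    have := hpde x t hx; linarith
  rw [hUtval, hpk]
  field_simp
  ring
end

section
/- Let m, p ∈ ℝ, n ∈ ℕ, and let u : (0,∞) × ℝ → ℝ be smooth and satisfy u_t − (m/x)·∂_x(x·uⁿ·u_x) = p·u. Define T^t(x,t) = x·u·e^{−pt} and T^x(x,t) = −m·x·uⁿ·u_x·e^{−pt}. Then ∂_t T^t + ∂_x T^x = 0 for all x > 0, t ∈ ℝ. -/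
/-- Conservation law for `u_t − (m/x)(x uⁿ u_x)_x = p u` from the multiplier `Λ = e^{−pt}`. -/
theorem stmt6 (m p : ℝ) (n : ℕ)
    (u : ℝ → ℝ → ℝ) (hu : ContDiff ℝ (⊤ : ℕ∞) (Function.uncurry u))
    (hpde : ∀ x t : ℝ, 0 < x →
      deriv (fun s => u x s) t
        - (m / x) * deriv (fun s => s * (u s t) ^ n * deriv (fun r => u r t) s) x
        = p * u x t)
    (Tt Tx : ℝ → ℝ → ℝ)
    (hTt : ∀ x t : ℝ, Tt x t = x * u x t * Real.exp (-(p * t)))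
    (hTx : ∀ x t : ℝ, Tx x t =
      -(m * x * (u x t) ^ n * deriv (fun r => u r t) x * Real.exp (-(p * t)))) :
    ∀ x t : ℝ, 0 < x →
      deriv (fun s => Tt x s) t + deriv (fun s => Tx s t) x = 0 := by
  intro x t hx
  have hx0 : x ≠ 0 := ne_of_gt hx
  set e := Real.exp (-(p * t)) with he
  set D := deriv (fun s => s * (u s t) ^ n * deriv (fun r => u r t) s) x with hD
  -- time derivative of u at (x,t)
  have hF : Differentiable ℝ (Function.uncurry u) := hu.differentiable (by simp)
  have hcurve : HasDerivAt (fun s : ℝ => ((x, s) : ℝ × ℝ)) (0, 1) t := by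
    simpa using HasDerivAt.prodMk (hasDerivAt_const t x) (hasDerivAt_id t)
  have hut : HasDerivAt (fun s => u x s)
      (fderiv ℝ (Function.uncurry u) (x, t) (0, 1)) t := by
    have := (hF (x, t)).hasFDerivAt.comp_hasDerivAt t hcurve
    simpa [Function.uncurry, Function.comp_def] using this
  set ut := fderiv ℝ (Function.uncurry u) (x, t) (0, 1) with hutdef
  -- derivative of exponential
  have hexp : HasDerivAt (fun s : ℝ => Real.exp (-(p * s))) (e * -(p * 1)) t := by
    exact (((hasDerivAt_id t).const_mul p).neg).exp
  -- derivative of Tt in t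
  have hTt' : deriv (fun s => Tt x s) t = x * ut * e + x * u x t * (e * -(p * 1)) := by
    have h : HasDerivAt (fun s => x * u x s * Real.exp (-(p * s)))
        ((x * ut) * e + (x * u x t) * (e * -(p * 1))) t :=
      (hut.const_mul x).mul hexp
    simp only [hTt]
    simpa [mul_assoc] using h.deriv
  -- derivative of Tx in x
  have hTx' : deriv (fun s => Tx s t) x = -(m * e) * D := by
    have hfun : (fun s => Tx s t)
        = fun s => -(m * e) * (s * (u s t) ^ n * deriv (fun r => u r t) s) := by
      funext s; rw [hTx]; ring
    rw [hfun, deriv_const_mul_field]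
  -- relate ut to the PDE
  have hpde' := hpde x t hx
  have hut' : deriv (fun s => u x s) t = ut := hut.deriv
  rw [hut'] at hpde'
  have hutval : ut = p * u x t + (m / x) * D := by linarith
  rw [hTt', hTx', hutval]
  field_simp
  ring
end

section
/- Let m, p ∈ ℝ, n ∈ ℕ, and let u : (0,∞) × ℝ → ℝ be smooth and satisfy u_t − (m/x)·∂_x(x·uⁿ·u_x) = p·u. Define T^t(x,t) = x·u·e^{−pt}·ln(x) and T^x(x,t) = e^{−pt}·(−m·x·ln(x)·uⁿ·u_x + m·u^{n+1}/(n+1)). Then ∂_t T^t + ∂_x T^x = 0 for all x > 0, t ∈ ℝ. -/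
/-- Conserved vector for `u_t − (m/x)(x uⁿ u_x)_x = p u` from the multiplier
`Λ = e^{−pt} ln x`. -/
theorem stmt7 (m p : ℝ) (n : ℕ)
    (u : ℝ → ℝ → ℝ) (hu : ContDiff ℝ (⊤ : ℕ∞) (Function.uncurry u))
    (hpde : ∀ x t : ℝ, 0 < x →
      deriv (fun s => u x s) t
        - (m / x) * deriv (fun s => s * (u s t) ^ n * deriv (fun r => u r t) s) x
        = p * u x t)
    (Tt Tx : ℝ → ℝ → ℝ)
    (hTt : ∀ x t : ℝ, Tt x t = x * u x t * Real.exp (-(p * t)) * Real.log x)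
    (hTx : ∀ x t : ℝ, Tx x t = Real.exp (-(p * t)) *
      (-(m * x * Real.log x * (u x t) ^ n * deriv (fun r => u r t) x)
        + m * (u x t) ^ (n + 1) / (n + 1))) :
    ∀ x t : ℝ, 0 < x →
      deriv (fun s => Tt x s) t + deriv (fun s => Tx s t) x = 0 := by
  intro x t hx
  have hx0 : x ≠ 0 := ne_of_gt hx
  have hg : ContDiff ℝ (⊤ : ℕ∞) (fun s => u s t) :=
    hu.comp (contDiff_id.prodMk contDiff_const)
  have hh : ContDiff ℝ (⊤ : ℕ∞) (fun s => u x s) :=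
    hu.comp (contDiff_const.prodMk contDiff_id)
  have hg' : ContDiff ℝ ((⊤ : ℕ∞) : WithTop ℕ∞) (deriv (fun s => u s t)) :=
    (contDiff_infty_iff_deriv.mp (hg.of_le (by simp))).2
  have hgx : HasDerivAt (fun s => u s t) (deriv (fun r => u r t) x) x :=
    (hg.differentiable (by simp) x).hasDerivAt
  have hg'x : HasDerivAt (deriv (fun r => u r t)) (deriv (deriv (fun r => u r t)) x) x :=
    (hg'.differentiable (by simp) x).hasDerivAt
  have hht : HasDerivAt (fun s => u x s) (deriv (fun s => u x s) t) t :=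
    (hh.differentiable (by simp) t).hasDerivAt
  -- derivative of the flux-core w(s) = s * u^n * u_x
  have hw : HasDerivAt (fun s => s * (u s t) ^ n * deriv (fun r => u r t) s)
      ((1 * (u x t) ^ n + x * ((n : ℝ) * (u x t) ^ (n - 1) * deriv (fun r => u r t) x))
          * deriv (fun r => u r t) x
        + x * (u x t) ^ n * deriv (deriv (fun r => u r t)) x) x :=
    ((hasDerivAt_id x).mul (hgx.pow n)).mul hg'x
  -- time derivative of Tt
  have hexp : HasDerivAt (fun s : ℝ => Real.exp (-(p * s))) (Real.exp (-(p * t)) * -p) t := by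
    have h1 : HasDerivAt (fun s : ℝ => -(p * s)) (-p) t := by
      simpa [Pi.neg_def] using ((hasDerivAt_id t).const_mul p).neg
    simpa using h1.exp
  have hA : deriv (fun s => Tt x s) t
      = (x * deriv (fun s => u x s) t * Real.exp (-(p * t))
          + x * u x t * (Real.exp (-(p * t)) * -p)) * Real.log x := by
    have h2 := ((hht.const_mul x).mul hexp).mul_const (Real.log x)
    have hfun : (fun s => Tt x s) = fun s => x * u x s * Real.exp (-(p * s)) * Real.log x := by
      funext s; rw [hTt]
    rw [hfun]
    exact h2.deriv
  -- space derivative of Tx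
  have hlog : HasDerivAt Real.log x⁻¹ x := Real.hasDerivAt_log hx0
  have h1 : HasDerivAt (fun s : ℝ => m * s) m x := by
    simpa using (hasDerivAt_id x).const_mul m
  have h4 := ((h1.mul hlog).mul (hgx.pow n)).mul hg'x
  have h5 := (hgx.pow (n + 1)).const_mul m
  have h6 := ((h4.neg).add (h5.div_const ((n : ℝ) + 1))).const_mul (Real.exp (-(p * t)))
  have hfunx : (fun s => Tx s t)
      = fun s => Real.exp (-(p * t)) *
          (-(m * s * Real.log s * (u s t) ^ n * deriv (fun r => u r t) s)
            + m * (u s t) ^ (n + 1) / ((n : ℝ) + 1)) := by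
    funext s; rw [hTx]
  -- use the PDE
  have hpd := hpde x t hx
  rw [hw.deriv] at hpd
  have hn : ((n : ℝ) + 1) ≠ 0 := by positivity
  have hut : deriv (fun s => u x s) t
      = p * u x t + (m / x) *
        ((1 * (u x t) ^ n + x * ((n : ℝ) * (u x t) ^ (n - 1) * deriv (fun r => u r t) x))
            * deriv (fun r => u r t) x
          + x * (u x t) ^ n * deriv (deriv (fun r => u r t)) x) := by linarith
  rw [hA, hfunx, (show HasDerivAt (fun s => Real.exp (-(p * t)) *
          (-(m * s * Real.log s * (u s t) ^ n * deriv (fun r => u r t) s)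
            + m * (u s t) ^ (n + 1) / ((n : ℝ) + 1))) _ x from h6).deriv, hut]
  simp only [Pi.mul_apply, Pi.pow_apply, Nat.add_sub_cancel]
  have hsimp : Nat.cast (n + 1) = (n : ℝ) + 1 := by push_cast; ring
  rw [hsimp]
  field_simp
  ring
end

section
/- Let n ∈ ℕ, n ≥ 1, and let u : (0,∞) × ℝ → (0,∞) be smooth and satisfy u_t − (1/x)·∂_x(x·u^{1/n}·u_x) = u. Define T^t(x,t) = x·u·e^{−t}·ln(x) and T^x(x,t) = e^{−t}·(−x·ln(x)·u^{1/n}·u_x + (n/(n+1))·u^{(n+1)/n}). Then ∂_t T^t + ∂_x T^x = 0 for all x > 0, t ∈ ℝ. -/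
/-- Conserved vector for `u_t − (1/x)(x u^{1/n} u_x)_x = u` (with `u > 0`) from the
multiplier `Λ = e^{−t} ln x`. -/
theorem stmt8 (n : ℕ) (hn : 1 ≤ n)
    (u : ℝ → ℝ → ℝ) (hu : ContDiff ℝ (⊤ : ℕ∞) (Function.uncurry u))
    (hupos : ∀ x t : ℝ, 0 < x → 0 < u x t)
    (hpde : ∀ x t : ℝ, 0 < x →
      deriv (fun s => u x s) t
        - (1 / x) * deriv (fun s => s * (u s t) ^ ((1 : ℝ) / n) * deriv (fun r => u r t) s) x
        = u x t)
    (Tt Tx : ℝ → ℝ → ℝ)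
    (hTt : ∀ x t : ℝ, Tt x t = x * u x t * Real.exp (-t) * Real.log x)
    (hTx : ∀ x t : ℝ, Tx x t = Real.exp (-t) *
      (-(x * Real.log x * (u x t) ^ ((1 : ℝ) / n) * deriv (fun r => u r t) x)
        + ((n : ℝ) / (n + 1)) * (u x t) ^ (((n : ℝ) + 1) / n))) :
    ∀ x t : ℝ, 0 < x →
      deriv (fun s => Tt x s) t + deriv (fun s => Tx s t) x = 0 := by
  intro x t hx
  have hn0 : (n : ℝ) ≠ 0 := Nat.cast_ne_zero.mpr (by omega)
  have hn1 : (n : ℝ) + 1 ≠ 0 := by positivity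
  have hxne : x ≠ 0 := hx.ne'
  have hupx : u x t ≠ 0 := (hupos x t hx).ne'
  -- smoothness of slices
  have hC1 : ContDiff ℝ (⊤ : ℕ∞) (fun s => u s t) :=
    hu.comp (contDiff_id.prodMk contDiff_const)
  have hC2 : ContDiff ℝ (⊤ : ℕ∞) (fun s => u x s) :=
    hu.comp (contDiff_const.prodMk contDiff_id)
  have hDX : Differentiable ℝ (fun s => u s t) := hC1.differentiable (by simp)
  have hC1' : ContDiff ℝ ((⊤ : ℕ∞) : WithTop ℕ∞) (fun s => u s t) := hC1.of_le (by simp)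
  have hDXX : Differentiable ℝ (deriv (fun s => u s t)) :=
    ((contDiff_infty_iff_deriv.mp hC1').2).differentiable
      (by simp)
  have hU : HasDerivAt (fun s => u s t) (deriv (fun s => u s t) x) x := (hDX x).hasDerivAt
  have hUX : HasDerivAt (deriv (fun s => u s t)) (deriv (deriv (fun s => u s t)) x) x :=
    (hDXX x).hasDerivAt
  have hut : HasDerivAt (fun s => u x s) (deriv (fun s => u x s) t) t :=
    ((hC2.differentiable (by simp)) t).hasDerivAt
  -- abbreviations
  set ux := deriv (fun s => u s t) x with hux_def
  set uxx := deriv (deriv (fun s => u s t)) x with huxx_def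
  set ut := deriv (fun s => u x s) t with hut_def
  -- rpow derivatives
  have hR : HasDerivAt (fun s => (u s t) ^ ((1 : ℝ) / n))
      (ux * ((1 : ℝ) / n) * (u x t) ^ ((1 : ℝ) / n - 1)) x := hU.rpow_const (Or.inl hupx)
  have hpm : ((n : ℝ) + 1) / n - 1 = (1 : ℝ) / n := by field_simp; ring
  have hP : HasDerivAt (fun s => (u s t) ^ (((n : ℝ) + 1) / n))
      (ux * (((n : ℝ) + 1) / n) * (u x t) ^ ((1 : ℝ) / n)) x := by
    have := hU.rpow_const (p := ((n : ℝ) + 1) / n) (Or.inl hupx)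
    rwa [hpm] at this
  -- derivative of the flux inner function (matches the PDE)
  have hF : HasDerivAt (fun s => s * (u s t) ^ ((1 : ℝ) / n) * deriv (fun r => u r t) s)
      ((1 * (u x t) ^ ((1 : ℝ) / n) + x * (ux * ((1 : ℝ) / n) * (u x t) ^ ((1 : ℝ) / n - 1))) * ux
        + (x * (u x t) ^ ((1 : ℝ) / n)) * uxx) x :=
    ((hasDerivAt_id x).mul hR).mul hUX
  have hpde' := hpde x t hx
  rw [hF.deriv] at hpde'
  -- time derivative of Tt
  have hexp : HasDerivAt (fun s : ℝ => Real.exp (-s)) (-Real.exp (-t)) t := by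
    simpa [Function.comp_def] using (Real.hasDerivAt_exp (-t)).comp t ((hasDerivAt_id t).neg)
  have hTt' : HasDerivAt (fun s => Tt x s)
      (((0 * u x t + x * ut) * Real.exp (-t) + (x * u x t) * (-Real.exp (-t))) * Real.log x) t := by
    have heq : (fun s => Tt x s) = fun s => x * u x s * Real.exp (-s) * Real.log x :=
      funext fun s => hTt x s
    rw [heq]
    exact (((hasDerivAt_const t x).mul hut).mul hexp).mul_const _
  -- space derivative of Tx
  have hlog : HasDerivAt Real.log x⁻¹ x := Real.hasDerivAt_log hxne
  have hxlog : HasDerivAt (fun s => s * Real.log s) (1 * Real.log x + x * x⁻¹) x :=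
    (hasDerivAt_id x).mul hlog
  have hB : HasDerivAt (fun s => s * Real.log s * (u s t) ^ ((1 : ℝ) / n))
      ((1 * Real.log x + x * x⁻¹) * (u x t) ^ ((1 : ℝ) / n)
        + (x * Real.log x) * (ux * ((1 : ℝ) / n) * (u x t) ^ ((1 : ℝ) / n - 1))) x :=
    hxlog.mul hR
  have hCdr : HasDerivAt
      (fun s => s * Real.log s * (u s t) ^ ((1 : ℝ) / n) * deriv (fun r => u r t) s)
      (((1 * Real.log x + x * x⁻¹) * (u x t) ^ ((1 : ℝ) / n)
        + (x * Real.log x) * (ux * ((1 : ℝ) / n) * (u x t) ^ ((1 : ℝ) / n - 1))) * ux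
        + (x * Real.log x * (u x t) ^ ((1 : ℝ) / n)) * uxx) x :=
    hB.mul hUX
  have hTx' : HasDerivAt (fun s => Tx s t)
      (Real.exp (-t) * (-((((1 * Real.log x + x * x⁻¹) * (u x t) ^ ((1 : ℝ) / n)
        + (x * Real.log x) * (ux * ((1 : ℝ) / n) * (u x t) ^ ((1 : ℝ) / n - 1))) * ux
        + (x * Real.log x * (u x t) ^ ((1 : ℝ) / n)) * uxx))
        + ((n : ℝ) / ((n : ℝ) + 1)) * (ux * (((n : ℝ) + 1) / n) * (u x t) ^ ((1 : ℝ) / n)))) x := by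
    have heq : (fun s => Tx s t) = fun s => Real.exp (-t) *
        (-(s * Real.log s * (u s t) ^ ((1 : ℝ) / n) * deriv (fun r => u r t) s)
          + ((n : ℝ) / ((n : ℝ) + 1)) * (u s t) ^ (((n : ℝ) + 1) / n)) :=
      funext fun s => hTx s t
    rw [heq]
    exact (hCdr.neg.add (hP.const_mul _)).const_mul _
  rw [hTt'.deriv, hTx'.deriv]
  have hxinv : x * x⁻¹ = 1 := mul_inv_cancel₀ hxne
  rw [hxinv]
  have h2 : x * (1 / x * ((1 * (u x t) ^ ((1 : ℝ) / n)
      + x * (ux * ((1 : ℝ) / n) * (u x t) ^ ((1 : ℝ) / n - 1))) * ux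
      + (x * (u x t) ^ ((1 : ℝ) / n)) * uxx))
      = ((1 * (u x t) ^ ((1 : ℝ) / n)
      + x * (ux * ((1 : ℝ) / n) * (u x t) ^ ((1 : ℝ) / n - 1))) * ux
      + (x * (u x t) ^ ((1 : ℝ) / n)) * uxx) := by
    rw [one_div, ← mul_assoc, mul_inv_cancel₀ hxne, one_mul]
  have h3 := congrArg (fun z => x * z) hpde'
  simp only [mul_sub] at h3
  rw [h2] at h3
  have hc : (n : ℝ) / ((n : ℝ) + 1) * (((n : ℝ) + 1) / (n : ℝ)) = 1 := by
    field_simp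
  linear_combination (Real.log x * Real.exp (-t)) * h3
    + (Real.exp (-t) * ux * (u x t) ^ ((1 : ℝ) / (n : ℝ))) * hc
end
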